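/- For any category X, presheaf A : Xᵒᵖ ⥤ Type and copresheaf M : X ⥤ Type, the diagram E_{A ⧀ M} over X is an exponential of E_M by E_A in Cat/X: for every functor p : P ⥤ X there is a bijection, natural in p, between functors over X from the pullback P ×_X E_A to E_M and functors over X from P to E_{A ⧀ M}. -/

import Mathlib

open CategoryTheory CategoryTheory.Limits Opposite

universe u

/-- The pointwise complement `A ⧀ M` of a presheaf `A` in a copresheaf `M`. -/
@[simps]
def cmpl {X : Type u} [Category.{u} X] (A : Xᵒᵖ ⥤ Type u) (M : X ⥤ Type u) :
    X ⥤ Type u where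
  obj x := A.obj (op x) → M.obj x
  map {x y} f := TypeCat.ofHom fun φ => fun a => M.map f (φ (A.map f.op a))
  map_id := by intro x; ext φ a; simp
  map_comp := by intros; ext φ a; simp

/-- The category of elements `E_A` of a presheaf `A`, fibered over `X` (a discrete
fibration): objects `(x, a)` with `a ∈ A(x)`, morphisms `(x,a) → (y,b)` the arrows
`λ : x → y` with `A(λ)(b) = a`. -/
structure LeftEl {X : Type u} [Category.{u} X] (A : Xᵒᵖ ⥤ Type u) : Type u where
  pt : X
  el : A.obj (op pt)

instance {X : Type u} [Category.{u} X] (A : Xᵒᵖ ⥤ Type u) : Category.{u} (LeftEl A) where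
  Hom s t := {l : s.pt ⟶ t.pt // A.map l.op t.el = s.el}
  id s := ⟨𝟙 s.pt, by simp⟩
  comp {s t r} f g := ⟨f.1 ≫ g.1, by rw [op_comp, A.map_comp, types_comp_apply, g.2, f.2]⟩
  id_comp := by intros; apply Subtype.ext; simp
  comp_id := by intros; apply Subtype.ext; simp
  assoc := by intros; apply Subtype.ext; simp

/-- The projection `E_A ⥤ X`. -/
@[simps]
def LeftEl.π {X : Type u} [Category.{u} X] (A : Xᵒᵖ ⥤ Type u) : LeftEl A ⥤ X where
  obj s := s.pt
  map f := f.1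
  map_id := by intros; rfl
  map_comp := by intros; rfl

instance (X : Type u) [Category.{u} X] : HasBinaryProducts (Over (Cat.of X)) :=
  Over.ConstructProducts.over_binaryProduct_of_pullback

/-- `E_A` with its projection, as an object of `Cat/X`. -/
def overEA {X : Type u} [Category.{u} X] (A : Xᵒᵖ ⥤ Type u) : Over (Cat.of X) :=
  Over.mk (Y := Cat.of (LeftEl A)) ((LeftEl.π A).toCatHom : Cat.of (LeftEl A) ⟶ Cat.of X)

/-- `E_M` with its projection, as an object of `Cat/X`. -/
def overEl {X : Type u} [Category.{u} X] (M : X ⥤ Type u) : Over (Cat.of X) :=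
  Over.mk (Y := Cat.of M.Elements) ((CategoryOfElements.π M).toCatHom : Cat.of M.Elements ⟶ Cat.of X)

set_option maxHeartbeats 1000000

namespace ExpAux

variable {X : Type u} [Category.{u} X] {A : Xᵒᵖ ⥤ Type u} {M : X ⥤ Type u}

/-- the structure functor of an object over `X` -/
def pf (p : Over (Cat.of X)) : p.left ⥤ X := p.hom.toFunctor

@[simp] lemma LeftEl_eqToHom_fst {s t : LeftEl A} (h : s = t) :
    (eqToHom h).1 = eqToHom (congrArg LeftEl.pt h) := by subst h; rfl

@[simp] lemma LeftEl_id_fst (s : LeftEl A) : (𝟙 s : s ⟶ s).1 = 𝟙 s.pt := rfl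
@[simp] lemma LeftEl_comp_fst {s t r : LeftEl A} (f : s ⟶ t) (g : t ⟶ r) :
    (f ≫ g).1 = f.1 ≫ g.1 := rfl

lemma LeftEl_hom_ext {s t : LeftEl A} (f g : s ⟶ t) (h : f.1 = g.1) : f = g :=
  Subtype.ext h

/-- Explicit pullback `P ×_X E_A`. -/
structure PB (A : Xᵒᵖ ⥤ Type u) (p : Over (Cat.of X)) : Type u where
  base : p.left
  el : A.obj (op ((pf p).obj base))

variable {p : Over (Cat.of X)}

instance : Category.{u} (PB A p) where
  Hom s t := {f : s.base ⟶ t.base // A.map ((pf p).map f).op t.el = s.el}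
  id s := ⟨𝟙 s.base, by simp⟩
  comp {s t r} f g := ⟨f.1 ≫ g.1, by
    rw [Functor.map_comp, op_comp, A.map_comp, types_comp_apply, g.2, f.2]⟩
  id_comp := by intros; apply Subtype.ext; simp
  comp_id := by intros; apply Subtype.ext; simp
  assoc := by intros; apply Subtype.ext; simp

@[simp] lemma PB_eqToHom_fst {s t : PB A p} (h : s = t) :
    (eqToHom h).1 = eqToHom (congrArg PB.base h) := by subst h; rfl

@[simp] lemma PB_id_fst (s : PB A p) : (𝟙 s : s ⟶ s).1 = 𝟙 s.base := rfl
@[simp] lemma PB_comp_fst {s t r : PB A p} (f : s ⟶ t) (g : t ⟶ r) :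
    (f ≫ g).1 = f.1 ≫ g.1 := rfl

lemma PB_ext {s t : PB A p} (h1 : s.base = t.base) (h2 : HEq s.el t.el) : s = t := by
  cases s; cases t; cases h1; cases h2; rfl

/-- first projection -/
@[simps] def Pfst : PB A p ⥤ p.left where
  obj s := s.base
  map f := f.1
  map_id _ := rfl
  map_comp _ _ := rfl

/-- second projection -/
@[simps] def Psnd : PB A p ⥤ LeftEl A where
  obj s := ⟨(pf p).obj s.base, s.el⟩
  map f := ⟨(pf p).map f.1, f.2⟩
  map_id s := by apply Subtype.ext; simp
  map_comp f g := by apply Subtype.ext; simp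

end ExpAux
namespace ExpAux
variable {X : Type u} [Category.{u} X] {A : Xᵒᵖ ⥤ Type u} {M : X ⥤ Type u}
variable {p : Over (Cat.of X)}

lemma map_eqToHom_heq {x y : X} (h : x = y) (a : A.obj (op y)) :
    HEq (A.map (eqToHom h).op a) a := by subst h; simp

lemma LeftEl_el_heq {s t : LeftEl A} (h : s = t) : HEq s.el t.el := by subst h; rfl

lemma key {x y x' y' : X} (hx : x' = x) (hy : y' = y) (l : x ⟶ y) (a : A.obj (op y)) :
    A.map (eqToHom hx ≫ l ≫ eqToHom hy.symm).op (A.map (eqToHom hy).op a)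
      = A.map (eqToHom hx).op (A.map l.op a) := by
  subst hx; subst hy; simp

/-- `P ×_X E_A` as an object of `Cat/X`. -/
def overPB (A : Xᵒᵖ ⥤ Type u) (p : Over (Cat.of X)) : Over (Cat.of X) :=
  Over.mk (Y := Cat.of (PB A p))
    ((Pfst ⋙ (pf p) : PB A p ⥤ X).toCatHom : Cat.of (PB A p) ⟶ Cat.of X)

/-- The binary fan exhibiting `overPB A p` as `p ⨯ overEA A`. -/
def fan (A : Xᵒᵖ ⥤ Type u) (p : Over (Cat.of X)) : BinaryFan p (overEA A) :=
  BinaryFan.mk (P := overPB A p)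
    (Over.homMk (Cat.Hom.ofFunctor Pfst : Cat.of (PB A p) ⟶ p.left) rfl)
    (Over.homMk (Cat.Hom.ofFunctor Psnd : Cat.of (PB A p) ⟶ Cat.of (LeftEl A)) rfl)

/-- first leg of a fan, as a functor -/
def sf (s : BinaryFan p (overEA A)) : s.pt.left ⥤ p.left := s.fst.left.toFunctor

/-- second leg of a fan, as a functor -/
def ss (s : BinaryFan p (overEA A)) : s.pt.left ⥤ LeftEl A := s.snd.left.toFunctor

/-- a morphism into `overPB A p`, as a functor -/
def mf {c : Over (Cat.of X)} (m : c ⟶ overPB A p) : c.left ⥤ PB A p := m.left.toFunctor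

section lift
variable (s : BinaryFan p (overEA A))

lemma hFK : ((sf s) ⋙ (pf p) : s.pt.left ⥤ X)
    = ((ss s) ⋙ LeftEl.π A : s.pt.left ⥤ X) :=
  congrArg Cat.Hom.toFunctor ((Over.w s.fst).trans (Over.w s.snd).symm)

lemma hobj (c : s.pt.left) :
    (pf p).obj ((sf s).obj c) = ((ss s).obj c).pt :=
  Functor.congr_obj (hFK s) c

/-- The lift functor for the universal property. -/
def liftF : s.pt.left ⥤ PB A p where
  obj c := ⟨(sf s).obj c, A.map (eqToHom (hobj s c)).op ((ss s).obj c).el⟩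
  map {c d} f := ⟨(sf s).map f, by
    have h := Functor.congr_hom (hFK s) f
    dsimp only [Functor.comp_map, LeftEl.π_map] at h
    dsimp only
    rw [h]
    exact (key (hobj s c) (hobj s d) ((ss s).map f).1 _).trans (by rw [((ss s).map f).2])⟩
  map_id c := by apply Subtype.ext; simp
  map_comp f g := by apply Subtype.ext; simp

/-- The lift as a morphism in `Cat/X`. -/
def liftHom : s.pt ⟶ overPB A p :=
  Over.homMk (Cat.Hom.ofFunctor (liftF s) : s.pt.left ⟶ Cat.of (PB A p)) (Over.w s.fst)

lemma fac₁ : liftHom s ≫ (fan A p).fst = s.fst := by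
  apply Over.OverMorphism.ext
  rfl

lemma fac₂ : liftHom s ≫ (fan A p).snd = s.snd := by
  apply Over.OverMorphism.ext
  apply Cat.Hom.ext
  show (liftF s ⋙ Psnd : s.pt.left ⥤ LeftEl A) = (ss s)
  apply CategoryTheory.Functor.ext
  · intro c d f
    apply Subtype.ext
    have h := Functor.congr_hom (hFK s) f
    dsimp only [Functor.comp_map, LeftEl.π_map] at h
    rw [LeftEl_comp_fst, LeftEl_comp_fst, LeftEl_eqToHom_fst, LeftEl_eqToHom_fst]
    exact h
  · intro c
    cases e : (ss s).obj c
    dsimp [liftF, Psnd]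
    congr 1
    · rw [hobj s c, e]
    · refine HEq.trans (map_eqToHom_heq _ _) ?_
      rw [e]

lemma uniq (m : s.pt ⟶ overPB A p)
    (h₁ : m ≫ (fan A p).fst = s.fst) (h₂ : m ≫ (fan A p).snd = s.snd) :
    m = liftHom s := by
  have hm1 : ((mf m) ⋙ Pfst : s.pt.left ⥤ p.left) = (sf s) :=
    congrArg (fun k => Cat.Hom.toFunctor (CommaMorphism.left k)) h₁
  have hm2 : ((mf m) ⋙ Psnd : s.pt.left ⥤ LeftEl A) = (ss s) :=
    congrArg (fun k => Cat.Hom.toFunctor (CommaMorphism.left k)) h₂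
  apply Over.OverMorphism.ext
  apply Cat.Hom.ext
  show (mf m) = (liftF s : s.pt.left ⥤ PB A p)
  apply CategoryTheory.Functor.ext
  · intro c d f
    apply Subtype.ext
    have h := Functor.congr_hom hm1 f
    dsimp only [Functor.comp_map, Pfst_map] at h
    rw [PB_comp_fst, PB_comp_fst, PB_eqToHom_fst, PB_eqToHom_fst]
    exact h
  · intro c
    apply PB_ext
    · exact Functor.congr_obj hm1 c
    · exact (LeftEl_el_heq (Functor.congr_obj hm2 c)).trans
        (map_eqToHom_heq (hobj s c) _).symm

end lift

/-- `overPB A p` is a binary product of `p` and `overEA A`. -/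
def fanIsLimit (A : Xᵒᵖ ⥤ Type u) (p : Over (Cat.of X)) : IsLimit (fan A p) :=
  BinaryFan.isLimitMk liftHom fac₁ fac₂ uniq

end ExpAux
namespace ExpAux
variable {X : Type u} [Category.{u} X] {A : Xᵒᵖ ⥤ Type u} {M : X ⥤ Type u}
variable {p : Over (Cat.of X)}

lemma map_eqToHom_heq_M {x y : X} (h : x = y) (m : M.obj x) :
    HEq (M.map (eqToHom h) m) m := by subst h; simp

lemma cmpl_heq' {x y : X} (h : x = y) (φ : A.obj (op x) → M.obj x) :
    HEq (fun a : A.obj (op y) =>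
      M.map (𝟙 y) (M.map (eqToHom h) (φ (A.map (eqToHom h).op a)))) φ := by
  subst h
  have hφ : ∀ a, M.map (𝟙 x) (M.map (eqToHom rfl) (φ (A.map (eqToHom rfl).op a))) = φ a := by
    intro a; simp
  exact heq_of_eq (funext hφ)

lemma cmpl_heq {x y : X} (h : x = y) (φ : A.obj (op x) → M.obj x) :
    HEq (fun a : A.obj (op y) => M.map (eqToHom h) (φ (A.map (eqToHom h).op a))) φ := by
  subst h; simp

lemma El_ext {F : X ⥤ Type u} {s t : F.Elements} (h1 : s.1 = t.1) (h2 : HEq s.2 t.2) :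
    s = t := by
  cases s; cases t; cases h1; cases h2; rfl

@[simp] lemma El_eqToHom_val {F : X ⥤ Type u} {s t : F.Elements} (h : s = t) :
    (eqToHom h).val = eqToHom (congrArg Sigma.fst h) := by subst h; rfl

@[simp] lemma eqToHom_apply_trans {α β γ : Type u} (h : α = β) (h' : β = γ) (a : α) :
    eqToHom h' (eqToHom h a) = eqToHom (h.trans h') a := by subst h; subst h'; rfl

/-- a morphism out of `overPB A p`, as a functor -/
def Hf (H : overPB A p ⟶ overEl M) : PB A p ⥤ M.Elements := H.left.toFunctor

/-- a morphism into `overEl (cmpl A M)`, as a functor -/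
def Gf (G : p ⟶ overEl (cmpl A M)) : p.left ⥤ (cmpl A M).Elements := G.left.toFunctor

section curry
variable (H : overPB A p ⟶ overEl M)

lemma hw (u : PB A p) : ((Hf H).obj u).1 = (pf p).obj u.base :=
  Functor.congr_obj (congrArg Cat.Hom.toFunctor (Over.w H)) u

/-- Currying: the functor `P ⥤ E_{A ⧀ M}` associated to `H : P ×_X E_A ⥤ E_M`. -/
def curryF : p.left ⥤ (cmpl A M).Elements where
  obj c := ⟨(pf p).obj c,
    fun a => M.map (eqToHom (hw H ⟨c, a⟩)) ((Hf H).obj ⟨c, a⟩).2⟩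
  map {c d} f := ⟨(pf p).map f, by
    funext a
    have hu := ((Hf H).map (show (⟨c, A.map ((pf p).map f).op a⟩ : PB A p) ⟶ ⟨d, a⟩
      from ⟨f, rfl⟩)).2
    have hp' : ((Hf H).map (show (⟨c, A.map ((pf p).map f).op a⟩ : PB A p) ⟶ ⟨d, a⟩
        from ⟨f, rfl⟩)).val
        = eqToHom (hw H ⟨c, A.map ((pf p).map f).op a⟩) ≫ (pf p).map f
            ≫ eqToHom (hw H ⟨d, a⟩).symm :=
      Functor.congr_hom (congrArg Cat.Hom.toFunctor (Over.w H)) _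
    show M.map ((pf p).map f) (M.map (eqToHom (hw H ⟨c, A.map ((pf p).map f).op a⟩))
      ((Hf H).obj ⟨c, A.map ((pf p).map f).op a⟩).2) = M.map (eqToHom (hw H ⟨d, a⟩)) ((Hf H).obj ⟨d, a⟩).2
    rw [← hu, hp', ← FunctorToTypes.map_comp_apply, ← FunctorToTypes.map_comp_apply]
    exact congrFun (congrArg (fun g => ⇑(ConcreteCategory.hom (M.map g))) (by simp)) _⟩
  map_id c := by
    apply Subtype.ext
    simp only [CategoryTheory.Functor.map_id]
    rfl
  map_comp f g := by
    apply Subtype.ext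
    simp only [CategoryTheory.Functor.map_comp]
    rfl

/-- Currying at the level of `Cat/X`. -/
def curryHom : p ⟶ overEl (cmpl A M) :=
  Over.homMk (Cat.Hom.ofFunctor (curryF H) : p.left ⟶ Cat.of ((cmpl A M).Elements)) rfl

end curry

section uncurry
variable (G : p ⟶ overEl (cmpl A M))

lemma hG (c : p.left) : ((Gf G).obj c).1 = (pf p).obj c :=
  Functor.congr_obj (congrArg Cat.Hom.toFunctor (Over.w G)) c

/-- The value of the uncurried functor. -/
def uncEl (s : PB A p) : M.obj ((pf p).obj s.base) :=
  M.map (eqToHom (hG G s.base))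
    (((Gf G).obj s.base).2 (A.map (eqToHom (hG G s.base)).op s.el))

/-- Uncurrying: the functor `P ×_X E_A ⥤ E_M` associated to `G : P ⥤ E_{A ⧀ M}`. -/
def uncurryF : PB A p ⥤ M.Elements where
  obj s := ⟨(pf p).obj s.base, uncEl G s⟩
  map {s t} f := ⟨(pf p).map f.1, by
    have hu := congrFun ((Gf G).map f.1).2
    have hp' : ((Gf G).map f.1).val
        = eqToHom (hG G s.base) ≫ (pf p).map f.1 ≫ eqToHom (hG G t.base).symm :=
      Functor.congr_hom (congrArg Cat.Hom.toFunctor (Over.w G)) f.1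
    have harg : A.map ((Gf G).map f.1).val.op (A.map (eqToHom (hG G t.base)).op t.el)
        = A.map (eqToHom (hG G s.base)).op s.el := by
      rw [hp']
      simp only [op_comp, FunctorToTypes.map_comp_apply, eqToHom_op, eqToHom_map,
        eqToHom_apply_trans, eqToHom_refl, types_id_apply, f.2]
    have hu : ∀ a, M.map ((Gf G).map f.1).val (((Gf G).obj s.base).2
        (A.map ((Gf G).map f.1).val.op a)) = ((Gf G).obj t.base).2 a := hu
    show M.map ((pf p).map f.1) (M.map (eqToHom (hG G s.base)) (((Gf G).obj s.base).2
        (A.map (eqToHom (hG G s.base)).op s.el))) = M.map (eqToHom (hG G t.base))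
        (((Gf G).obj t.base).2 (A.map (eqToHom (hG G t.base)).op t.el))
    rw [← hu, harg, hp', ← FunctorToTypes.map_comp_apply,
      ← FunctorToTypes.map_comp_apply]
    exact congrFun (congrArg (fun g => ⇑(ConcreteCategory.hom (M.map g))) (by simp)) _⟩
  map_id s := by
    apply Subtype.ext
    show (pf p).map (𝟙 s.base) = _
    rw [CategoryTheory.Functor.map_id]
    rfl
  map_comp f g := by
    apply Subtype.ext
    show (pf p).map (f.1 ≫ g.1) = _
    rw [CategoryTheory.Functor.map_comp]
    rfl

/-- Uncurrying at the level of `Cat/X`. -/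
def uncurryHom : overPB A p ⟶ overEl M :=
  Over.homMk (Cat.Hom.ofFunctor (uncurryF G) : Cat.of (PB A p) ⟶ Cat.of M.Elements) rfl

end uncurry

lemma uncurry_curry (H : overPB A p ⟶ overEl M) : uncurryHom (curryHom H) = H := by
  apply Over.OverMorphism.ext
  apply Cat.Hom.ext
  show (uncurryF (curryHom H) : PB A p ⥤ M.Elements) = (Hf H)
  apply CategoryTheory.Functor.ext
  · intro s t f
    apply Subtype.ext
    have hp' : ((Hf H).map f).val
        = eqToHom (hw H s) ≫ (pf p).map f.1 ≫ eqToHom (hw H t).symm :=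
      Functor.congr_hom (congrArg Cat.Hom.toFunctor (Over.w H)) f
    show (pf p).map f.1 = _
    rw [CategoryOfElements.comp_val, CategoryOfElements.comp_val, El_eqToHom_val, El_eqToHom_val, hp']
    simp
    show _ = eqToHom rfl ≫ _ ≫ eqToHom rfl
    simp
  · intro s
    apply El_ext
    · exact (hw H s).symm
    · refine (map_eqToHom_heq_M _ _).trans ?_
      refine (map_eqToHom_heq_M _ _).trans ?_
      have e : (⟨s.base, A.map (eqToHom (hG (curryHom H) s.base)).op s.el⟩ : PB A p) = s :=
        PB_ext rfl (map_eqToHom_heq _ _)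
      exact congr_arg_heq (fun u => ((Hf H).obj u).2) e

lemma curry_uncurry (G : p ⟶ overEl (cmpl A M)) : curryHom (uncurryHom G) = G := by
  apply Over.OverMorphism.ext
  apply Cat.Hom.ext
  show (curryF (uncurryHom G) : p.left ⥤ (cmpl A M).Elements) = (Gf G)
  apply CategoryTheory.Functor.ext
  · intro c d f
    apply Subtype.ext
    have hp' : ((Gf G).map f).val
        = eqToHom (hG G c) ≫ (pf p).map f ≫ eqToHom (hG G d).symm :=
      Functor.congr_hom (congrArg Cat.Hom.toFunctor (Over.w G)) f
    show (pf p).map f = _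
    rw [@CategoryOfElements.comp_val _ _ (cmpl A M), @CategoryOfElements.comp_val _ _ (cmpl A M),
      @El_eqToHom_val _ _ (cmpl A M), @El_eqToHom_val _ _ (cmpl A M), hp']
    simp
    show _ = eqToHom rfl ≫ _ ≫ eqToHom rfl
    simp
  · intro c
    apply El_ext
    · exact (hG G c).symm
    · refine HEq.trans (heq_of_eq (funext fun a => ?_)) (cmpl_heq (hG G c) ((Gf G).obj c).2)
      show M.map (eqToHom rfl) (M.map (eqToHom (hG G c))
        (((Gf G).obj c).2 (A.map (eqToHom (hG G c)).op a))) = _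
      simp

end ExpAux
namespace ExpAux
variable {X : Type u} [Category.{u} X] {A : Xᵒᵖ ⥤ Type u} {M : X ⥤ Type u}
variable {p q : Over (Cat.of X)}

lemma heq_curry {x y : X} (h : x = y) (D : A.obj (op x) → M.Elements)
    (hD : ∀ b, (D b).1 = x) :
    HEq (fun a : A.obj (op y) =>
        M.map (eqToHom ((hD (A.map (eqToHom h).op a)).trans h))
          (D (A.map (eqToHom h).op a)).2)
      (fun b : A.obj (op x) => M.map (eqToHom (hD b)) (D b).2) := by
  subst h
  refine heq_of_eq (funext fun a => ?_)
  generalize hb : A.map (eqToHom (rfl : x = x)).op a = b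
  rw [show b = a from hb.symm.trans (by simp)]

/-- The chosen product `p ⨯ overEA A` is isomorphic to the explicit pullback. -/
noncomputable def prodIso (A : Xᵒᵖ ⥤ Type u) (p : Over (Cat.of X)) :
    (p ⨯ overEA A : Over (Cat.of X)) ≅ overPB A p :=
  IsLimit.conePointUniqueUpToIso (limit.isLimit _) (fanIsLimit A p)

lemma prodIso_inv_fst : (prodIso A p).inv ≫ prod.fst = (fan A p).fst :=
  IsLimit.conePointUniqueUpToIso_inv_comp (limit.isLimit _) (fanIsLimit A p)
    ⟨WalkingPair.left⟩

lemma prodIso_inv_snd : (prodIso A p).inv ≫ prod.snd = (fan A p).snd :=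
  IsLimit.conePointUniqueUpToIso_inv_comp (limit.isLimit _) (fanIsLimit A p)
    ⟨WalkingPair.right⟩

/-- The explicit pullback is functorial in `p`. -/
def PBmap (g : q ⟶ p) : overPB A q ⟶ overPB A p :=
  liftHom (BinaryFan.mk (P := overPB A q) ((fan A q).fst ≫ g) (fan A q).snd)

lemma PBmap_fst (g : q ⟶ p) : PBmap g ≫ (fan A p).fst = (fan A q).fst ≫ g := by
  exact fac₁ (BinaryFan.mk (P := overPB A q) ((fan A q).fst ≫ g) (fan A q).snd)

lemma PBmap_snd (g : q ⟶ p) : PBmap g ≫ (fan A p).snd = (fan A q).snd := by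
  exact fac₂ (BinaryFan.mk (P := overPB A q) ((fan A q).fst ≫ g) (fan A q).snd)

lemma prodIso_natural (g : q ⟶ p) :
    (prodIso A q).inv ≫ prod.map g (𝟙 (overEA A)) = PBmap g ≫ (prodIso A p).inv := by
  apply Limits.prod.hom_ext
  · have h1 : ((prodIso A q).inv ≫ prod.map g (𝟙 (overEA A))) ≫ prod.fst
        = (fan A q).fst ≫ g := by
      rw [Category.assoc, Limits.prod.map_fst, ← Category.assoc, prodIso_inv_fst]
      rfl
    have h2 : (PBmap g ≫ (prodIso A p).inv) ≫ prod.fst = PBmap g ≫ (fan A p).fst := by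
      rw [Category.assoc, prodIso_inv_fst]
      rfl
    rw [h1, h2, PBmap_fst]
  · have h1 : ((prodIso A q).inv ≫ prod.map g (𝟙 (overEA A))) ≫ prod.snd
        = (fan A q).snd := by
      rw [Category.assoc, Limits.prod.map_snd, Category.comp_id, prodIso_inv_snd]
    have h2 : (PBmap g ≫ (prodIso A p).inv) ≫ prod.snd = PBmap g ≫ (fan A p).snd := by
      rw [Category.assoc, prodIso_inv_snd]
      rfl
    rw [h1, h2, PBmap_snd]

lemma curry_nat (g : q ⟶ p) (H : overPB A p ⟶ overEl M) :
    curryHom (PBmap g ≫ H) = g ≫ curryHom H := by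
  apply Over.OverMorphism.ext
  apply Cat.Hom.ext
  show (curryF (PBmap g ≫ H) : q.left ⥤ (cmpl A M).Elements)
    = (g.left.toFunctor ⋙ curryF H : q.left ⥤ (cmpl A M).Elements)
  refine CategoryTheory.Functor.ext (fun c => ?_) (fun c d f => ?_)
  · apply El_ext
    · exact (Functor.congr_obj (congrArg Cat.Hom.toFunctor (Over.w g)) c).symm
    · exact heq_curry (Functor.congr_obj (congrArg Cat.Hom.toFunctor (Over.w g)) c)
        (fun b => (Hf H).obj ⟨g.left.toFunctor.obj c, b⟩)
        (fun b => hw H ⟨g.left.toFunctor.obj c, b⟩)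
  · apply Subtype.ext
    have hp' : (pf q).map f
        = eqToHom (Functor.congr_obj (congrArg Cat.Hom.toFunctor (Over.w g)) c).symm
            ≫ (pf p).map (g.left.toFunctor.map f)
            ≫ eqToHom (Functor.congr_obj (congrArg Cat.Hom.toFunctor (Over.w g)) d) :=
      Functor.congr_hom (congrArg Cat.Hom.toFunctor (Over.w g)).symm f
    show (pf q).map f = _
    rw [@CategoryOfElements.comp_val _ _ (cmpl A M), @CategoryOfElements.comp_val _ _ (cmpl A M),
      @El_eqToHom_val _ _ (cmpl A M), @El_eqToHom_val _ _ (cmpl A M), hp']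
    rfl

/-- The curry bijection transported along `prodIso`. -/
noncomputable def eqv (A : Xᵒᵖ ⥤ Type u) (M : X ⥤ Type u) (p : Over (Cat.of X)) :
    ((p ⨯ overEA A) ⟶ overEl M) ≃ (p ⟶ overEl (cmpl A M)) where
  toFun h := curryHom ((prodIso A p).inv ≫ h)
  invFun k := (prodIso A p).hom ≫ uncurryHom k
  left_inv h := by
    show (prodIso A p).hom ≫ uncurryHom (curryHom ((prodIso A p).inv ≫ h)) = h
    rw [uncurry_curry, ← Category.assoc, Iso.hom_inv_id, Category.id_comp]
  right_inv k := by
    show curryHom ((prodIso A p).inv ≫ (prodIso A p).hom ≫ uncurryHom k) = k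
    rw [← Category.assoc, Iso.inv_hom_id, Category.id_comp, curry_uncurry]

lemma eqv_natural (g : q ⟶ p) (h : (p ⨯ overEA A) ⟶ overEl M) :
    eqv A M q (prod.map g (𝟙 (overEA A)) ≫ h) = g ≫ eqv A M p h := by
  show curryHom ((prodIso A q).inv ≫ prod.map g (𝟙 (overEA A)) ≫ h)
    = g ≫ curryHom ((prodIso A p).inv ≫ h)
  rw [← Category.assoc, prodIso_natural, Category.assoc, curry_nat]

end ExpAux


/-- `E_{A ⧀ M}` is an exponential of `E_M` by `E_A` in `Cat/X`:
for every `p : P ⥤ X` over `X` there is a bijection, natural in `p`, between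
morphisms over `X` from the pullback `P ×_X E_A` (the binary product `p ⨯ E_A`
in `Cat/X`) to `E_M`, and morphisms over `X` from `p` to `E_{A ⧀ M}`. -/
theorem elements_cmpl_is_exponential (X : Type u) [Category.{u} X]
    (A : Xᵒᵖ ⥤ Type u) (M : X ⥤ Type u) :
    ∃ e : ∀ p : Over (Cat.of X),
        ((p ⨯ overEA A) ⟶ overEl M) ≃ (p ⟶ overEl (cmpl A M)),
      ∀ (p q : Over (Cat.of X)) (g : q ⟶ p) (h : (p ⨯ overEA A) ⟶ overEl M),
        e q (prod.map g (𝟙 (overEA A)) ≫ h) = g ≫ e p h := by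
  exact ⟨ExpAux.eqv A M, fun p q g h => ExpAux.eqv_natural g h⟩
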